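/- arXiv:math/0608631 — 6 statements merged into one kernel-verified Lean document; each statement's English description precedes it below -/
import Mathlib

section
/- Let λ > 0, let j ≥ 1 be an integer, set λ_j = 2^j·λ, and let k₀ ≥ 1 be an integer. Let X₁, X₂ be independent Poisson random variables with mean λ_j, and X₃, X₄ be independent Poisson random variables with mean λ_j/2, all four mutually independent. Set r = (1 + 2^{-5})^{-1/2}, p_H = P(X₃ − X₄ ≥ k₀), p_BH = P(X₁ − X₂ + 8(X₃ − X₄) ≥ ⌈8k₀/r⌉), and A(λ_j) = P(X₁ − X₂ ≥ 9). Then p_BH ≤ p_H + A(λ_j)·(1 − 2·p_H). -/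
open MeasureTheory ProbabilityTheory
open scoped NNReal

/-!
Of the Poisson laws only this matters: `S = X₀ - X₁` and `D = X₂ - X₃` are independent and
symmetric. As `r < 1`, the threshold `m = ⌈8k₀/r⌉` exceeds `8k₀`, so on `{|S| ≤ 8}` the event
`S + 8D ≥ m` forces `D ≥ k₀`; this part has probability at most
`P(D ≥ k₀) P(|S| ≤ 8) = p_H (1 - 2A)`. On `{S < -8}` the event is the image under
`(S, D) ↦ (-S, -D)` of `{S + 8D ≤ -m, S > 8}`, which is disjoint from `{S + 8D ≥ m, S > 8}`;
so both tails together contribute at most `P(S > 8) = A`.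
-/

instance MeasureTheory.Measure.prod.instIsNegInvariant {G H : Type*} [MeasurableSpace G]
    [MeasurableSpace H] [Neg G] [Neg H] [MeasurableNeg G] [MeasurableNeg H]
    (μ : Measure G) (ν : Measure H) [SFinite μ] [SFinite ν] [μ.IsNegInvariant]
    [ν.IsNegInvariant] : (μ.prod ν).IsNegInvariant where
  neg_eq_self := by
    change Measure.map (Prod.map Neg.neg Neg.neg) _ = _
    rw [← Measure.map_prod_map μ ν measurable_neg measurable_neg,
      Measure.map_neg_eq_self, Measure.map_neg_eq_self]

theorem ProbabilityTheory.IndepFun.isNegInvariant_map_sub {Ω G : Type*} [MeasurableSpace Ω]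
    {μ : Measure Ω} [IsFiniteMeasure μ] [AddGroup G] [MeasurableSpace G] [MeasurableSub₂ G]
    [MeasurableNeg G] {X Y : Ω → G} (hXY : IndepFun X Y μ) (hid : IdentDistrib X Y μ μ) :
    (μ.map (X - Y)).IsNegInvariant where
  neg_eq_self := by
    have hswap : IdentDistrib (fun ω => (X ω, Y ω)) (fun ω => (Y ω, X ω)) μ μ :=
      ⟨hid.aemeasurable_fst.prodMk hid.aemeasurable_snd,
        hid.aemeasurable_snd.prodMk hid.aemeasurable_fst, by
        rw [(indepFun_iff_map_prod_eq_prod_map_map hid.aemeasurable_fst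
            hid.aemeasurable_snd).1 hXY,
          (indepFun_iff_map_prod_eq_prod_map_map hid.aemeasurable_snd
            hid.aemeasurable_fst).1 hXY.symm, hid.map_eq]⟩
    have hsub : IdentDistrib (X - Y) (Y - X) μ μ :=
      hswap.comp (measurable_fst.sub measurable_snd)
    rw [Measure.neg_def, AEMeasurable.map_map_of_aemeasurable measurable_neg.aemeasurable
      hsub.aemeasurable_fst, hsub.map_eq]
    congr 1
    funext ω
    exact neg_sub (X ω) (Y ω)

theorem measureReal_abs_le_eq_one_sub_two_mul (σ : Measure ℤ) [IsProbabilityMeasure σ]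
    [σ.IsNegInvariant] {c : ℤ} (hc : 0 ≤ c) :
    σ.real {s | |s| ≤ c} = 1 - 2 * σ.real {s | c < s} := by
  have hcompl : {s : ℤ | |s| ≤ c}ᶜ = Neg.neg ⁻¹' {s | c < s} ∪ {s | c < s} := by
    ext s
    simp only [Set.mem_compl_iff, Set.mem_ofPred_eq, Set.mem_union, Set.mem_preimage, abs_le]
    omega
  have hdisj : Disjoint (Neg.neg ⁻¹' {s : ℤ | c < s}) {s | c < s} :=
    Set.disjoint_left.2 fun s hs hs' => by
      simp only [Set.mem_preimage, Set.mem_ofPred_eq] at hs hs'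
      omega
  have := probReal_compl_eq_one_sub (μ := σ) (.of_discrete : MeasurableSet {s : ℤ | |s| ≤ c})
  rw [hcompl, measureReal_union hdisj .of_discrete, measureReal_def, Measure.measure_preimage_neg,
    ← measureReal_def] at this
  linarith

theorem measure_setOf_le_fst_add_mul_snd_le (ρ : Measure (ℤ × ℤ)) [ρ.IsNegInvariant] {c k m : ℤ}
    (hc : 0 < c) (hck : c * k < m) (hm : 0 < m) :
    ρ {p | m ≤ p.1 + c * p.2} ≤ ρ ({s | |s| ≤ c} ×ˢ {d | k ≤ d}) + ρ ({s | c < s} ×ˢ .univ) := by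
  set B := {p : ℤ × ℤ | m ≤ p.1 + c * p.2}
  set B' := {p : ℤ × ℤ | p.1 + c * p.2 ≤ -m}
  set T := {s : ℤ | c < s} ×ˢ (Set.univ : Set ℤ)
  have hcover : B ⊆ {s | |s| ≤ c} ×ˢ {d | k ≤ d} ∪ (-(B' ∩ T) ∪ B ∩ T) := by
    rintro ⟨s, d⟩ hB
    simp only [B, B', T, Set.mem_ofPred_eq, Set.mem_union, Set.mem_prod, Set.mem_neg,
      Set.mem_inter_iff, Set.mem_univ, Prod.fst_neg, Prod.snd_neg, abs_le, and_true] at hB ⊢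
    rcases lt_or_ge s (-c) with hs | hs
    · exact .inr (.inl ⟨by linarith, by linarith⟩)
    rcases le_or_gt s c with hs' | hs'
    · refine .inl ⟨⟨hs, hs'⟩, ?_⟩
      by_contra! hd
      nlinarith
    · exact .inr (.inr ⟨hB, hs'⟩)
  have hmirror : ρ (-(B' ∩ T)) + ρ (B ∩ T) ≤ ρ T := by
    rw [Measure.measure_neg, ← measure_union _ .of_discrete]
    · exact measure_mono (Set.union_subset Set.inter_subset_right Set.inter_subset_right)
    · exact Set.disjoint_left.2 fun p hB' hB => by
        simp only [B, B', Set.mem_inter_iff, Set.mem_ofPred_eq] at hB' hB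
        linarith [hB.1, hB'.1]
  calc ρ B ≤ ρ ({s | |s| ≤ c} ×ˢ {d | k ≤ d}) + (ρ (-(B' ∩ T)) + ρ (B ∩ T)) :=
        (measure_mono hcover).trans <| (measure_union_le _ _).trans <| by
          gcongr; exact measure_union_le _ _
    _ ≤ _ := by gcongr

theorem measureReal_prod_setOf_le_fst_add_mul_snd_le (σ ν : Measure ℤ) [IsProbabilityMeasure σ]
    [IsProbabilityMeasure ν] [σ.IsNegInvariant] [ν.IsNegInvariant] {c k m : ℤ}
    (hc : 0 < c) (hck : c * k < m) (hm : 0 < m) :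
    (σ.prod ν).real {p | m ≤ p.1 + c * p.2} ≤
      ν.real {d | k ≤ d} * (1 - 2 * σ.real {s | c < s}) + σ.real {s | c < s} := by
  have h := ENNReal.toReal_mono (by finiteness)
    (measure_setOf_le_fst_add_mul_snd_le (σ.prod ν) hc hck hm)
  rw [ENNReal.toReal_add (by finiteness) (by finiteness)] at h
  simp only [← measureReal_def, measureReal_prod_prod, probReal_univ, mul_one,
    measureReal_abs_le_eq_one_sub_two_mul σ hc.le] at h
  linarith

theorem Int.lt_ceil_div_of_lt_one {n : ℤ} (hn : 0 < n) {r : ℝ} (hr₀ : 0 < r) (hr₁ : r < 1) :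
    n < ⌈(n : ℝ) / r⌉ :=
  Int.lt_ceil.2 <| (lt_div_iff₀ hr₀).2 <| by
    have : (0 : ℝ) < n := by exact_mod_cast hn
    nlinarith

theorem ProbabilityTheory.IndepFun.measureReal_setOf_le_add_mul_le {Ω : Type*}
    [MeasurableSpace Ω] {μ : Measure Ω} [IsProbabilityMeasure μ] {S D : Ω → ℤ}
    (hSD : IndepFun S D μ) (hS : Measurable S) (hD : Measurable D)
    [(μ.map S).IsNegInvariant] [(μ.map D).IsNegInvariant] {c k m : ℤ}
    (hc : 0 < c) (hck : c * k < m) (hm : 0 < m) :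
    μ.real {ω | m ≤ S ω + c * D ω} ≤
      μ.real {ω | k ≤ D ω} * (1 - 2 * μ.real {ω | c < S ω}) + μ.real {ω | c < S ω} := by
  have := Measure.isProbabilityMeasure_map (μ := μ) hS.aemeasurable
  have := Measure.isProbabilityMeasure_map (μ := μ) hD.aemeasurable
  have h := measureReal_prod_setOf_le_fst_add_mul_snd_le (μ.map S) (μ.map D) hc hck hm
  rwa [← (indepFun_iff_map_prod_eq_prod_map_map hS.aemeasurable hD.aemeasurable).1 hSD,
    map_measureReal_apply (hS.prodMk hD) .of_discrete, map_measureReal_apply hD .of_discrete,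
    map_measureReal_apply hS .of_discrete] at h

theorem stmt0_pBH_le_pH_add_A_general
    {Ω : Type*} [MeasurableSpace Ω] (μ : Measure Ω) [IsProbabilityMeasure μ]
    (lamj : ℝ≥0)
    (k₀ : ℤ) (hk₀ : 1 ≤ k₀)
    (X : Fin 4 → Ω → ℕ) (hXmeas : ∀ i, Measurable (X i))
    (hindep : iIndepFun X μ)
    (hX0 : Measure.map (X 0) μ = poissonMeasure lamj)
    (hX1 : Measure.map (X 1) μ = poissonMeasure lamj)
    (hX2 : Measure.map (X 2) μ = poissonMeasure (lamj / 2))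
    (hX3 : Measure.map (X 3) μ = poissonMeasure (lamj / 2))
    (r : ℝ) (hr : r = (1 + 2 ^ (-5 : ℤ) : ℝ) ^ (-(1 / 2) : ℝ))
    (pH pBH A : ℝ)
    (hpH : pH = (μ {ω | k₀ ≤ (X 2 ω : ℤ) - (X 3 ω : ℤ)}).toReal)
    (hpBH : pBH = (μ {ω | (⌈(8 * (k₀ : ℝ)) / r⌉ : ℤ) ≤
        (X 0 ω : ℤ) - (X 1 ω : ℤ) + 8 * ((X 2 ω : ℤ) - (X 3 ω : ℤ))}).toReal)
    (hA : A = (μ {ω | (9 : ℤ) ≤ (X 0 ω : ℤ) - (X 1 ω : ℤ)}).toReal) :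
    pBH ≤ pH + A * (1 - 2 * pH) := by
  set Z : Fin 4 → Ω → ℤ := fun i ω => X i ω
  have hZ i : Measurable (Z i) := measurable_of_countable _ |>.comp (hXmeas i)
  have hZindep : iIndepFun Z μ := hindep.comp (fun _ n => (n : ℤ)) fun _ => .of_discrete
  have hid i j (h : μ.map (X i) = μ.map (X j)) : IdentDistrib (Z i) (Z j) μ μ :=
    IdentDistrib.comp ⟨(hXmeas i).aemeasurable, (hXmeas j).aemeasurable, h⟩ .of_discrete
  have := (hZindep.indepFun (by decide : (0 : Fin 4) ≠ 1)).isNegInvariant_map_sub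
    (hid 0 1 (hX0.trans hX1.symm))
  have := (hZindep.indepFun (by decide : (2 : Fin 4) ≠ 3)).isNegInvariant_map_sub
    (hid 2 3 (hX2.trans hX3.symm))
  have hr₀ : 0 < r := hr ▸ Real.rpow_pos_of_pos (by norm_num) _
  have hr₁ : r < 1 := hr ▸ Real.rpow_lt_one_of_one_lt_of_neg (by norm_num) (by norm_num)
  have hm : 8 * k₀ < ⌈8 * (k₀ : ℝ) / r⌉ := by
    simpa using Int.lt_ceil_div_of_lt_one (n := 8 * k₀) (by omega) hr₀ hr₁
  have key := (hZindep.indepFun_sub_sub hZ 0 1 2 3 (by decide) (by decide) (by decide)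
    (by decide)).measureReal_setOf_le_add_mul_le ((hZ 0).sub (hZ 1)) ((hZ 2).sub (hZ 3))
    (by norm_num : (0 : ℤ) < 8) hm (by omega)
  have hpBH' : pBH = μ.real {ω | ⌈8 * (k₀ : ℝ) / r⌉ ≤ (Z 0 - Z 1) ω + 8 * (Z 2 - Z 3) ω} := hpBH
  have hpH' : pH = μ.real {ω | k₀ ≤ (Z 2 - Z 3) ω} := hpH
  -- on `ℤ`, `8 < n` unfolds to `9 ≤ n`
  have hA' : A = μ.real {ω | 8 < (Z 0 - Z 1) ω} := hA
  rw [hpBH', hpH', hA']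
  linarith

/-- Let `λ > 0`, `j ≥ 1`, `λ_j = 2^j λ`, `k₀ ≥ 1` an integer.
Let `X 0, X 1` be independent Poisson(`λ_j`) and `X 2, X 3` independent Poisson(`λ_j / 2`),
all four mutually independent.  With `r = (1 + 2⁻⁵)^(-1/2)`,
`p_H = P(X 2 - X 3 ≥ k₀)`, `p_BH = P(X 0 - X 1 + 8 (X 2 - X 3) ≥ ⌈8 k₀ / r⌉)` and
`A = P(X 0 - X 1 ≥ 9)`, one has `p_BH ≤ p_H + A (1 - 2 p_H)`. -/
theorem stmt0_pBH_le_pH_add_A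
    {Ω : Type*} [MeasurableSpace Ω] (μ : Measure Ω) [IsProbabilityMeasure μ]
    (lam : ℝ≥0) (hlam : 0 < lam) (j : ℕ) (hj : 1 ≤ j) (lamj : ℝ≥0)
    (hlamj : lamj = 2 ^ j * lam)
    (k₀ : ℤ) (hk₀ : 1 ≤ k₀)
    (X : Fin 4 → Ω → ℕ) (hXmeas : ∀ i, Measurable (X i))
    (hindep : iIndepFun X μ)
    (hX0 : Measure.map (X 0) μ = poissonMeasure lamj)
    (hX1 : Measure.map (X 1) μ = poissonMeasure lamj)
    (hX2 : Measure.map (X 2) μ = poissonMeasure (lamj / 2))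
    (hX3 : Measure.map (X 3) μ = poissonMeasure (lamj / 2))
    (r : ℝ) (hr : r = (1 + 2 ^ (-5 : ℤ) : ℝ) ^ (-(1 / 2) : ℝ))
    (pH pBH A : ℝ)
    (hpH : pH = (μ {ω | k₀ ≤ (X 2 ω : ℤ) - (X 3 ω : ℤ)}).toReal)
    (hpBH : pBH = (μ {ω | (⌈(8 * (k₀ : ℝ)) / r⌉ : ℤ) ≤
        (X 0 ω : ℤ) - (X 1 ω : ℤ) + 8 * ((X 2 ω : ℤ) - (X 3 ω : ℤ))}).toReal)
    (hA : A = (μ {ω | (9 : ℤ) ≤ (X 0 ω : ℤ) - (X 1 ω : ℤ)}).toReal) :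
    pBH ≤ pH + A * (1 - 2 * pH) :=
  stmt0_pBH_le_pH_add_A_general μ lamj k₀ hk₀ X hXmeas hindep hX0 hX1 hX2 hX3 r hr pH pBH A hpH hpBH
    hA
end

section
/- Let λ > 0, let j ≥ 1 be an integer, set λ_j = 2^j·λ, let k₀ ≥ 1 be an integer, and let r = (1 + 2^{-5})^{-1/2}. Let X₁, X₂ be independent Poisson(λ_j), X₃, X₄ independent Poisson(λ_j/2), all mutually independent, and set A(λ_j) = P(X₁ − X₂ ≥ 9). Then the two-sided tail satisfies P(|X₁ − X₂ + 8(X₃ − X₄)| ≥ ⌈8k₀/r⌉) ≤ P(|X₃ − X₄| ≥ k₀) + 2·A(λ_j)·(1 − P(|X₃ − X₄| ≥ k₀)). -/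
/-!
If `|X 2 - X 3| < k₀`, then `⌈8 k₀ / r⌉ ≥ 8 k₀ + 1` (as `r < 1`) and the triangle inequality force
`|X 0 - X 1| ≥ 9`. The two differences are independent, and `X 0 - X 1` is symmetric because
`X 0, X 1` are i.i.d., so each sign of `X 0 - X 1` costs `A · P(|X 2 - X 3| < k₀)`.
-/

open MeasureTheory ProbabilityTheory
open scoped NNReal ENNReal

theorem Int.add_one_le_ceil_div {m : ℤ} (hm : 0 < m) {r : ℝ} (hr₀ : 0 < r) (hr₁ : r < 1) :
    m + 1 ≤ ⌈(m : ℝ) / r⌉ := by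
  have hm' : (0 : ℝ) < m := by exact_mod_cast hm
  rw [Int.add_one_le_iff, Int.lt_ceil, lt_div_iff₀ hr₀]
  nlinarith

theorem le_abs_of_le_abs_add_mul {D H a k t c : ℤ} (ha : 0 ≤ a) (hH : |H| < k)
    (hc : a * (k - 1) + t ≤ c) (hDH : c ≤ |D + a * H|) : t ≤ |D| := by
  have htri : |D + a * H| ≤ |D| + a * |H| := by
    simpa only [abs_mul, abs_of_nonneg ha] using abs_add_le D (a * H)
  have hHk : a * |H| ≤ a * (k - 1) := mul_le_mul_of_nonneg_left (by omega) ha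
  linarith

namespace ProbabilityTheory

variable {Ω : Type*} [MeasurableSpace Ω] {μ : Measure Ω}

theorem IdentDistrib.sub_neg_sub {G : Type*} [AddCommGroup G] [MeasurableSpace G]
    [MeasurableSub₂ G] [IsFiniteMeasure μ] {X Y : Ω → G} (hXY : IdentDistrib X Y μ μ)
    (hind : X ⟂ᵢ[μ] Y) : IdentDistrib (X - Y) (-(X - Y)) μ μ := by
  convert (hXY.prodMk hXY.symm hind hind.symm).comp measurable_sub using 1 <;>
    · ext ω
      simp

theorem measureReal_setOf_le_abs_add_mul_le [IsProbabilityMeasure μ] {D H : Ω → ℤ}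
    (hH : Measurable H) (hind : H ⟂ᵢ[μ] D) (hsymm : IdentDistrib D (-D) μ μ)
    {a k t c : ℤ} (ha : 0 ≤ a) (hc : a * (k - 1) + t ≤ c) :
    μ.real {ω | c ≤ |D ω + a * H ω|} ≤
      μ.real {ω | k ≤ |H ω|} + 2 * μ.real {ω | t ≤ D ω} * (1 - μ.real {ω | k ≤ |H ω|}) := by
  set S := {ω | k ≤ |H ω|}
  set T := D ⁻¹' {x | t ≤ x}
  set T' := D ⁻¹' {x | t ≤ -x}
  have hS : MeasurableSet S := hH (t := {x | k ≤ |x|}) MeasurableSet.of_discrete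
  have hindep (s : Set ℤ) : μ.real (Sᶜ ∩ D ⁻¹' s) = μ.real Sᶜ * μ.real (D ⁻¹' s) := by
    simp only [measureReal_def, ← ENNReal.toReal_mul]
    congr 1
    exact hind.measure_inter_preimage_eq_mul {x | ¬ k ≤ |x|} s
      MeasurableSet.of_discrete MeasurableSet.of_discrete
  have hflip : μ.real T' = μ.real T := by
    simp only [measureReal_def]
    congr 1
    exact (hsymm.measure_mem_eq (s := {x | t ≤ x}) MeasurableSet.of_discrete).symm
  have hsub : {ω | c ≤ |D ω + a * H ω|} ⊆ S ∪ (Sᶜ ∩ T ∪ Sᶜ ∩ T') := by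
    intro ω hω
    by_cases hSω : ω ∈ S
    · exact Or.inl hSω
    · have hD := le_abs_of_le_abs_add_mul ha (not_le.mp hSω) hc hω
      rcases le_abs.mp hD with hpos | hneg
      · exact Or.inr (Or.inl ⟨hSω, hpos⟩)
      · exact Or.inr (Or.inr ⟨hSω, hneg⟩)
  calc μ.real {ω | c ≤ |D ω + a * H ω|}
      ≤ μ.real (S ∪ (Sᶜ ∩ T ∪ Sᶜ ∩ T')) := measureReal_mono hsub
    _ ≤ μ.real S + (μ.real (Sᶜ ∩ T) + μ.real (Sᶜ ∩ T')) :=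
        (measureReal_union_le _ _).trans (add_le_add_right (measureReal_union_le _ _) _)
    _ = μ.real S + 2 * μ.real T * (1 - μ.real S) := by
        rw [hindep, hindep, hflip, probReal_compl_eq_one_sub hS]
        ring

end ProbabilityTheory

theorem stmt5_two_sided_pBH_bound_general
    {Ω : Type*} [MeasurableSpace Ω] (μ : Measure Ω) [IsProbabilityMeasure μ]
    (lamj : ℝ≥0)
    (k₀ : ℤ) (hk₀ : 1 ≤ k₀)
    (X : Fin 4 → Ω → ℕ) (hXmeas : ∀ i, Measurable (X i))
    (hindep : iIndepFun X μ)
    (hX0 : Measure.map (X 0) μ = poissonMeasure lamj)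
    (hX1 : Measure.map (X 1) μ = poissonMeasure lamj)
    (r : ℝ) (hr : r = (1 + 2 ^ (-5 : ℤ) : ℝ) ^ (-(1 / 2) : ℝ))
    (A : ℝ) (hA : A = (μ {ω | (9 : ℤ) ≤ (X 0 ω : ℤ) - (X 1 ω : ℤ)}).toReal) :
    (μ {ω | (⌈(8 * (k₀ : ℝ)) / r⌉ : ℤ) ≤
        |(X 0 ω : ℤ) - (X 1 ω : ℤ) + 8 * ((X 2 ω : ℤ) - (X 3 ω : ℤ))|}).toReal ≤
      (μ {ω | k₀ ≤ |(X 2 ω : ℤ) - (X 3 ω : ℤ)|}).toReal +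
        2 * A * (1 - (μ {ω | k₀ ≤ |(X 2 ω : ℤ) - (X 3 ω : ℤ)|}).toReal) := by
  have hr₀ : 0 < r := hr ▸ by positivity
  have hr₁ : r < 1 := hr ▸ Real.rpow_lt_one_of_one_lt_of_neg (by norm_num) (by norm_num)
  have hc : 8 * (k₀ - 1) + 9 ≤ ⌈(8 * (k₀ : ℝ)) / r⌉ := by
    have := Int.add_one_le_ceil_div (m := 8 * k₀) (by omega) hr₀ hr₁
    push_cast at this
    omega
  let Z (i : Fin 4) (ω : Ω) : ℤ := X i ω
  have hZ (i : Fin 4) : Measurable (Z i) := measurable_of_countable _ |>.comp (hXmeas i)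
  have hZindep : iIndepFun Z μ :=
    hindep.comp (fun _ n => (n : ℤ)) fun _ => measurable_of_countable _
  have hZ01 : IdentDistrib (Z 0) (Z 1) μ μ :=
    (⟨(hXmeas 0).aemeasurable, (hXmeas 1).aemeasurable, hX0.trans hX1.symm⟩ :
      IdentDistrib (X 0) (X 1) μ μ).comp (measurable_of_countable _)
  have hsymm := hZ01.sub_neg_sub (hZindep.indepFun (by decide))
  have hind : (Z 2 - Z 3) ⟂ᵢ[μ] (Z 0 - Z 1) :=
    (hZindep.indepFun_prodMk_prodMk hZ 2 3 0 1 (by decide) (by decide) (by decide)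
      (by decide)).comp measurable_sub measurable_sub
  subst hA
  exact measureReal_setOf_le_abs_add_mul_le ((hZ 2).sub (hZ 3)) hind hsymm (by norm_num) hc

/-- With `λ > 0`, `j ≥ 1`, `λ_j = 2^j λ`, `k₀ ≥ 1`,
`r = (1 + 2⁻⁵)^(-1/2)`, `X 0, X 1` independent Poisson(`λ_j`) and `X 2, X 3`
independent Poisson(`λ_j / 2`) (all mutually independent), and
`A(λ_j) = P(X 0 - X 1 ≥ 9)`, the two-sided tails satisfy
`P(|X 0 - X 1 + 8 (X 2 - X 3)| ≥ ⌈8 k₀ / r⌉) ≤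
  P(|X 2 - X 3| ≥ k₀) + 2 A(λ_j) (1 - P(|X 2 - X 3| ≥ k₀))`. -/
theorem stmt5_two_sided_pBH_bound
    {Ω : Type*} [MeasurableSpace Ω] (μ : Measure Ω) [IsProbabilityMeasure μ]
    (lam : ℝ≥0) (hlam : 0 < lam) (j : ℕ) (hj : 1 ≤ j) (lamj : ℝ≥0)
    (hlamj : lamj = 2 ^ j * lam)
    (k₀ : ℤ) (hk₀ : 1 ≤ k₀)
    (X : Fin 4 → Ω → ℕ) (hXmeas : ∀ i, Measurable (X i))
    (hindep : iIndepFun X μ)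
    (hX0 : Measure.map (X 0) μ = poissonMeasure lamj)
    (hX1 : Measure.map (X 1) μ = poissonMeasure lamj)
    (hX2 : Measure.map (X 2) μ = poissonMeasure (lamj / 2))
    (hX3 : Measure.map (X 3) μ = poissonMeasure (lamj / 2))
    (r : ℝ) (hr : r = (1 + 2 ^ (-5 : ℤ) : ℝ) ^ (-(1 / 2) : ℝ))
    (A : ℝ) (hA : A = (μ {ω | (9 : ℤ) ≤ (X 0 ω : ℤ) - (X 1 ω : ℤ)}).toReal) :
    (μ {ω | (⌈(8 * (k₀ : ℝ)) / r⌉ : ℤ) ≤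
        |(X 0 ω : ℤ) - (X 1 ω : ℤ) + 8 * ((X 2 ω : ℤ) - (X 3 ω : ℤ))|}).toReal ≤
      (μ {ω | k₀ ≤ |(X 2 ω : ℤ) - (X 3 ω : ℤ)|}).toReal +
        2 * A * (1 - (μ {ω | k₀ ≤ |(X 2 ω : ℤ) - (X 3 ω : ℤ)|}).toReal) :=
  stmt5_two_sided_pBH_bound_general μ lamj k₀ hk₀ X hXmeas hindep hX0 hX1 r hr A hA
end

section
/- Fix z > 0 and λ ≥ 0. For m > 0 with (2m+λ)² ≥ m+λ define G(m) = √((2m+λ)²/(m+λ) − 1) − √(λ(2m+λ)/(m+λ)). Then: (i) every m > 0 with (2m+λ)² ≥ m+λ and G(m) = z satisfies m ≥ m₀ := (1/8)·[z² − 2λ + 1 + √(z⁴ + (12λ+2)z² + 4λ² + 12λ + 1)]; and (ii) there exists exactly one m ≥ m₀ with G(m) = z. -/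
/-!
With `w = λ² / (m + λ)` one has `G m = √(4m + w - 1) - √(2λ - w)`, so squaring turns `G m = z`
into `Φ m = 1 + z²`, where `Φ m = 4m - 2λ + 2w - 2z √(2λ - w)`. As the square root is
nonnegative, a solution satisfies `(1 + z²)(m + λ) ≤ 4m² + 2λm`, a quadratic inequality whose
positive root is `m₀`; this is (i). On `[m₀, ∞)` the linear term `4m` of `Φ` dominates the
variation of `w` and of the square root, so `Φ` is strictly increasing there; since
`Φ m₀ ≤ 1 + z²` and `Φ` grows linearly, the intermediate value theorem gives (ii).
-/

open Real Set

lemma sqrt_sub_eq_iff {a b z : ℝ} (hz : 0 < z) (hb : 0 ≤ b) : √a - b = z ↔ a = (z + b) ^ 2 := by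
  rw [sub_eq_iff_eq_add, sqrt_eq_iff_mul_self_eq_of_pos (by positivity), eq_comm, sq]

lemma sqrt_sub_sqrt_mul_le {x y c : ℝ} (hcy : c ^ 2 ≤ y) (hyx : y ≤ x) :
    (√x - √y) * (2 * c) ≤ x - y := by
  have hy : c ≤ √y := le_sqrt_of_sq_le hcy
  have hx : √y ≤ √x := sqrt_le_sqrt hyx
  have hprod : (√x - √y) * (√x + √y) = x - y := by
    rw [mul_comm, ← sq_sub_sq, sq_sqrt (by nlinarith), sq_sqrt (by nlinarith)]
  nlinarith

namespace FAB

noncomputable def G (lam m : ℝ) : ℝ :=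
  √((2 * m + lam) ^ 2 / (m + lam) - 1) - √(lam * (2 * m + lam) / (m + lam))

noncomputable def threshold (z lam : ℝ) : ℝ :=
  (1 / 8) * (z ^ 2 - 2 * lam + 1 +
    √(z ^ 4 + (12 * lam + 2) * z ^ 2 + 4 * lam ^ 2 + 12 * lam + 1))

noncomputable def Φ (z lam m : ℝ) : ℝ :=
  4 * m - 2 * lam + 2 * (lam ^ 2 / (m + lam)) - 2 * z * √(2 * lam - lam ^ 2 / (m + lam))

variable {z lam m : ℝ}

lemma lam_le_two_lam_sub (hlam : 0 ≤ lam) (hm : 0 ≤ m) : lam ≤ 2 * lam - lam ^ 2 / (m + lam) := by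
  have : lam ^ 2 / (m + lam) ≤ lam := div_le_of_le_mul₀ (by positivity) hlam (by nlinarith)
  linarith

lemma G_eq_iff (hz : 0 < z) (hlam : 0 ≤ lam) (hm : 0 < m) :
    G lam m = z ↔ Φ z lam m = 1 + z ^ 2 := by
  have hs : m + lam ≠ 0 := by positivity
  have hA : (2 * m + lam) ^ 2 / (m + lam) - 1 = 4 * m + lam ^ 2 / (m + lam) - 1 := by
    field_simp; ring
  have hB : lam * (2 * m + lam) / (m + lam) = 2 * lam - lam ^ 2 / (m + lam) := by
    field_simp; ring
  have hw := lam_le_two_lam_sub hlam hm.le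
  rw [G, hA, hB, sqrt_sub_eq_iff hz (sqrt_nonneg _), Φ, add_sq, sq_sqrt (by linarith)]
  constructor <;> intro h <;> linarith

lemma sq_sqrt_discr (hlam : 0 ≤ lam) :
    √(z ^ 4 + (12 * lam + 2) * z ^ 2 + 4 * lam ^ 2 + 12 * lam + 1) ^ 2
      = (z ^ 2 - 2 * lam + 1) ^ 2 + 16 * lam * (1 + z ^ 2) := by
  rw [sq_sqrt (by positivity)]; ring

lemma exists_quad_eq_four_mul (hlam : 0 ≤ lam) : ∃ r ≤ 0, ∀ m,
    4 * m ^ 2 + 2 * lam * m - (1 + z ^ 2) * (m + lam) = 4 * (m - threshold z lam) * (m - r) := by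
  have hs := sq_sqrt_discr (z := z) hlam
  have := sqrt_nonneg (z ^ 4 + (12 * lam + 2) * z ^ 2 + 4 * lam ^ 2 + 12 * lam + 1)
  refine ⟨(1 / 8) * (z ^ 2 - 2 * lam + 1 -
    √(z ^ 4 + (12 * lam + 2) * z ^ 2 + 4 * lam ^ 2 + 12 * lam + 1)), by nlinarith, fun m => ?_⟩
  rw [threshold]; linear_combination (1 / 16) * hs

lemma threshold_pos (hlam : 0 ≤ lam) : 0 < threshold z lam := by
  have hs := sq_sqrt_discr (z := z) hlam
  have := sqrt_nonneg (z ^ 4 + (12 * lam + 2) * z ^ 2 + 4 * lam ^ 2 + 12 * lam + 1)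
  rw [threshold]
  nlinarith [sq_nonneg z]

lemma threshold_le_iff (hlam : 0 ≤ lam) (hm : 0 < m) :
    threshold z lam ≤ m ↔ (1 + z ^ 2) * (m + lam) ≤ 4 * m ^ 2 + 2 * lam * m := by
  obtain ⟨r, hr, hquad⟩ := exists_quad_eq_four_mul (z := z) hlam
  rw [iff_comm, ← sub_nonneg, hquad, mul_nonneg_iff_of_pos_right (by linarith),
    mul_nonneg_iff_of_pos_left four_pos, sub_nonneg]

lemma Φ_mul_add (hs : m + lam ≠ 0) : Φ z lam m * (m + lam) =
    4 * m ^ 2 + 2 * lam * m - 2 * z * √(2 * lam - lam ^ 2 / (m + lam)) * (m + lam) := by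
  rw [Φ]; field_simp; ring

lemma threshold_le_of_Φ_eq (hz : 0 ≤ z) (hlam : 0 ≤ lam) (hm : 0 < m)
    (h : Φ z lam m = 1 + z ^ 2) : threshold z lam ≤ m := by
  have hs : 0 < m + lam := by linarith
  have := Φ_mul_add (z := z) hs.ne'
  rw [h] at this
  rw [threshold_le_iff hlam hm]
  nlinarith [mul_nonneg (mul_nonneg hz (sqrt_nonneg (2 * lam - lam ^ 2 / (m + lam)))) hs.le]

lemma Φ_threshold_le (hz : 0 ≤ z) (hlam : 0 ≤ lam) : Φ z lam (threshold z lam) ≤ 1 + z ^ 2 := by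
  obtain ⟨r, -, hquad⟩ := exists_quad_eq_four_mul (z := z) hlam
  have hs : 0 < threshold z lam + lam := by linarith [threshold_pos (z := z) hlam]
  rw [← mul_le_mul_iff_left₀ hs, Φ_mul_add hs.ne']
  nlinarith [hquad (threshold z lam), mul_nonneg (mul_nonneg hz
    (sqrt_nonneg (2 * lam - lam ^ 2 / (threshold z lam + lam)))) hs.le]

-- Without `hq` this fails: for `z > 2√λ`, `Φ` decreases near `m = 0`.
lemma Φ_lt_Φ_of_lt {m₁ m₂ : ℝ} (hz : 0 ≤ z) (hlam : 0 ≤ lam) (hm₁ : 0 < m₁)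
    (hq : (1 + z ^ 2) * (m₁ + lam) ≤ 4 * m₁ ^ 2 + 2 * lam * m₁) (h : m₁ < m₂) :
    Φ z lam m₁ < Φ z lam m₂ := by
  rcases hlam.eq_or_lt with rfl | hlam
  · simpa [Φ] using h
  have hs₁ : 0 < m₁ + lam := by linarith
  have hs₂ : 0 < m₂ + lam := by linarith
  set w₁ := lam ^ 2 / (m₁ + lam)
  set w₂ := lam ^ 2 / (m₂ + lam)
  have hw : (w₁ - w₂) * ((m₁ + lam) * (m₂ + lam)) = lam ^ 2 * (m₂ - m₁) := by
    simp only [w₁, w₂]; field_simp; ring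
  have hw₂₁ : w₂ ≤ w₁ := div_le_div_of_nonneg_left (sq_nonneg _) hs₁ (by linarith)
  set t := √lam
  have ht : 0 < t := sqrt_pos.2 hlam
  have htt : t ^ 2 = lam := sq_sqrt hlam.le
  have hsqrt : (√(2 * lam - w₂) - √(2 * lam - w₁)) * (2 * t) ≤ w₁ - w₂ := by
    have := sqrt_sub_sqrt_mul_le (x := 2 * lam - w₂) (y := 2 * lam - w₁) (c := t)
      (by rw [htt]; exact lam_le_two_lam_sub hlam.le hm₁.le) (by linarith)
    linarith
  have hcubic : t ^ 3 * (2 * t + z) < 4 * ((m₁ + lam) * (m₂ + lam)) := by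
    rw [← htt] at hq ⊢
    nlinarith [sq_nonneg (z - t), mul_pos hm₁ ht, mul_pos (sub_pos.2 h) hs₁]
  have hkey : (w₁ - w₂) * (2 * t + z) < 4 * (m₂ - m₁) * t := by
    refine lt_of_mul_lt_mul_right ?_ (mul_pos hs₁ hs₂).le
    calc (w₁ - w₂) * (2 * t + z) * ((m₁ + lam) * (m₂ + lam))
        = (m₂ - m₁) * t * (t ^ 3 * (2 * t + z)) := by rw [mul_right_comm, hw, ← htt]; ring
      _ < (m₂ - m₁) * t * (4 * ((m₁ + lam) * (m₂ + lam))) := by gcongr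
      _ = _ := by ring
  have := mul_le_mul_of_nonneg_left hsqrt hz
  simp only [Φ]
  nlinarith

lemma Φ_strictMonoOn (hz : 0 ≤ z) (hlam : 0 ≤ lam) :
    StrictMonoOn (Φ z lam) (Ici (threshold z lam)) := fun m₁ h₁ _ _ h => by
  have hm₁ : 0 < m₁ := (threshold_pos hlam).trans_le h₁
  exact Φ_lt_Φ_of_lt hz hlam hm₁ ((threshold_le_iff hlam hm₁).1 h₁) h

lemma sub_le_Φ (hz : 0 ≤ z) (hlam : 0 ≤ lam) (hm : 0 ≤ m) :
    4 * m - 2 * lam - 2 * z * √(2 * lam) ≤ Φ z lam m := by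
  have hw : 0 ≤ lam ^ 2 / (m + lam) := by positivity
  have hsqrt : √(2 * lam - lam ^ 2 / (m + lam)) ≤ √(2 * lam) := sqrt_le_sqrt (by linarith)
  rw [Φ]
  nlinarith [mul_le_mul_of_nonneg_left hsqrt hz]

lemma continuousOn_Φ : ContinuousOn (Φ z lam) (Ioi (-lam)) := by
  have : ∀ m ∈ Ioi (-lam), m + lam ≠ 0 := fun m hm => by rw [mem_Ioi] at hm; linarith
  unfold Φ
  fun_prop (disch := assumption)

lemma existsUnique_Φ_eq (hz : 0 ≤ z) (hlam : 0 ≤ lam) :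
    ∃! m, threshold z lam ≤ m ∧ Φ z lam m = 1 + z ^ 2 := by
  set m₀ := threshold z lam
  have hm₀ : 0 < m₀ := threshold_pos hlam
  set M := max m₀ ((1 + z ^ 2 + 2 * lam + 2 * z * √(2 * lam)) / 4)
  have hM : 1 + z ^ 2 ≤ Φ z lam M :=
    le_trans (by linarith [le_max_right m₀ ((1 + z ^ 2 + 2 * lam + 2 * z * √(2 * lam)) / 4)])
      (sub_le_Φ hz hlam (hm₀.le.trans (le_max_left _ _)))
  obtain ⟨m, hm, hΦm⟩ := intermediate_value_Icc (le_max_left _ _)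
    (continuousOn_Φ.mono fun x hx => show -lam < x by linarith [hx.1])
    ⟨Φ_threshold_le hz hlam, hM⟩
  exact ⟨m, ⟨hm.1, hΦm⟩, fun m' hm' =>
    (Φ_strictMonoOn hz hlam).injOn hm'.1 hm.1 (hm'.2.trans hΦm.symm)⟩

end FAB

/-- Fix `z > 0` and `λ ≥ 0`.  With
`G m = √((2m+λ)²/(m+λ) - 1) - √(λ(2m+λ)/(m+λ))` and
`m₀ = (1/8)[z² - 2λ + 1 + √(z⁴ + (12λ+2)z² + 4λ² + 12λ + 1)]`:
(i) every `m > 0` with `(2m+λ)² ≥ m+λ` and `G m = z` satisfies `m ≥ m₀`;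
(ii) there is exactly one `m ≥ m₀` with `G m = z`. -/
theorem stmt7_FAB_feasibility_and_unique_solution
    (z lam : ℝ) (hz : 0 < z) (hlam : 0 ≤ lam)
    (G : ℝ → ℝ)
    (hG : G = fun m => Real.sqrt ((2 * m + lam) ^ 2 / (m + lam) - 1) -
      Real.sqrt (lam * (2 * m + lam) / (m + lam)))
    (m₀ : ℝ)
    (hm₀ : m₀ = (1 / 8) * (z ^ 2 - 2 * lam + 1 +
      Real.sqrt (z ^ 4 + (12 * lam + 2) * z ^ 2 + 4 * lam ^ 2 + 12 * lam + 1))) :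
    (∀ m : ℝ, 0 < m → m + lam ≤ (2 * m + lam) ^ 2 → G m = z → m₀ ≤ m) ∧
      (∃! m : ℝ, m₀ ≤ m ∧ G m = z) := by
  have hGΦ : ∀ m, 0 < m → (G m = z ↔ FAB.Φ z lam m = 1 + z ^ 2) := fun m hm =>
    hG ▸ FAB.G_eq_iff hz hlam hm
  subst hm₀
  refine ⟨fun m hm _ hGm => FAB.threshold_le_of_Φ_eq hz.le hlam hm ((hGΦ m hm).1 hGm), ?_⟩
  refine (existsUnique_congr fun m => and_congr_right fun hm => ?_).2
    (FAB.existsUnique_Φ_eq hz.le hlam)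
  exact hGΦ m ((FAB.threshold_pos hlam).trans_le hm)
end

section
/- Fix z > 0 and λ ≥ 0, and let m₀ = (1/8)·[z² − 2λ + 1 + √(z⁴ + (12λ+2)z² + 4λ² + 12λ + 1)]. Then (2m₀+λ)² ≥ m₀+λ and G(m₀) = √((2m₀+λ)²/(m₀+λ) − 1) − √(λ(2m₀+λ)/(m₀+λ)) ≤ z; more precisely, at m = m₀ one has G(m₀) = √(z² + (λ/(2m₀))(z²+1)) − √((λ/(2m₀))(z²+1)). -/
open Real

/-- Fix `z > 0`, `λ ≥ 0`, and let
`m₀ = (1/8)[z² - 2λ + 1 + √(z⁴ + (12λ+2)z² + 4λ² + 12λ + 1)]`.  Then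
`(2m₀+λ)² ≥ m₀+λ`, and with
`G m = √((2m+λ)²/(m+λ) - 1) - √(λ(2m+λ)/(m+λ))` one has
`G m₀ = √(z² + (λ/(2m₀))(z²+1)) - √((λ/(2m₀))(z²+1)) ≤ z`. -/
theorem stmt8_G_at_m0
    (z lam : ℝ) (hz : 0 < z) (hlam : 0 ≤ lam)
    (G : ℝ → ℝ)
    (hG : G = fun m => Real.sqrt ((2 * m + lam) ^ 2 / (m + lam) - 1) -
      Real.sqrt (lam * (2 * m + lam) / (m + lam)))
    (m₀ : ℝ)
    (hm₀ : m₀ = (1 / 8) * (z ^ 2 - 2 * lam + 1 +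
      Real.sqrt (z ^ 4 + (12 * lam + 2) * z ^ 2 + 4 * lam ^ 2 + 12 * lam + 1))) :
    m₀ + lam ≤ (2 * m₀ + lam) ^ 2 ∧
      G m₀ = Real.sqrt (z ^ 2 + (lam / (2 * m₀)) * (z ^ 2 + 1)) -
        Real.sqrt ((lam / (2 * m₀)) * (z ^ 2 + 1)) ∧
      G m₀ ≤ z := by
  set D : ℝ := z ^ 4 + (12 * lam + 2) * z ^ 2 + 4 * lam ^ 2 + 12 * lam + 1 with hD
  have hDnn : 0 ≤ D := by nlinarith [sq_nonneg z, sq_nonneg (z^2 - 2*lam + 1), sq_nonneg lam]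
  have hsqD : Real.sqrt D ^ 2 = D := Real.sq_sqrt hDnn
  -- √D ≥ z² + 2λ + 1
  have hDge : z ^ 2 + 2 * lam + 1 ≤ Real.sqrt D := by
    have : (z ^ 2 + 2 * lam + 1) ^ 2 ≤ D := by nlinarith [sq_nonneg z]
    calc z ^ 2 + 2 * lam + 1 = Real.sqrt ((z ^ 2 + 2 * lam + 1) ^ 2) :=
          (Real.sqrt_sq (by positivity)).symm
      _ ≤ Real.sqrt D := Real.sqrt_le_sqrt this
  have hm0pos : 0 < m₀ := by
    rw [hm₀]; nlinarith [hDge, sq_nonneg z]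
  -- the quadratic identity 4 m₀² = (z² - 2λ + 1) m₀ + λ (z² + 1)
  have key : 4 * m₀ ^ 2 = (z ^ 2 - 2 * lam + 1) * m₀ + lam * (z ^ 2 + 1) := by
    have h8 : 8 * m₀ - (z ^ 2 - 2 * lam + 1) = Real.sqrt D := by rw [hm₀]; ring
    have := hsqD
    rw [← h8] at this
    nlinarith [this]
  have hml : (0:ℝ) < m₀ + lam := by linarith
  have h2m : (2 * m₀) ≠ 0 := by positivity
  have h1 : (2 * m₀ + lam) ^ 2 / (m₀ + lam) - 1 = z ^ 2 + (lam / (2 * m₀)) * (z ^ 2 + 1) := by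
    field_simp
    ring_nf
    nlinarith [key, sq_nonneg m₀, mul_pos hm0pos hm0pos]
  have h2 : lam * (2 * m₀ + lam) / (m₀ + lam) = (lam / (2 * m₀)) * (z ^ 2 + 1) := by
    field_simp
    nlinarith [key]
  have hc : 0 ≤ (lam / (2 * m₀)) * (z ^ 2 + 1) := by positivity
  have hGval : G m₀ = Real.sqrt (z ^ 2 + (lam / (2 * m₀)) * (z ^ 2 + 1)) -
      Real.sqrt ((lam / (2 * m₀)) * (z ^ 2 + 1)) := by
    rw [hG]; simp only []; rw [h1, h2]
  refine ⟨by nlinarith [key, hm0pos, mul_nonneg hlam (sq_nonneg z)], hGval, ?_⟩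
  rw [hGval]
  clear hGval h1 h2 key hsqD hDge hDnn hm₀ hD hG
  generalize hcc : (lam / (2 * m₀)) * (z ^ 2 + 1) = c at hc
  have hsnn := Real.sqrt_nonneg c
  have hsq := Real.sq_sqrt hc
  have hle : Real.sqrt (z ^ 2 + c) ≤ z + Real.sqrt c := by
    have h : z ^ 2 + c ≤ (z + Real.sqrt c) ^ 2 := by
      nlinarith [mul_nonneg hz.le hsnn]
    calc Real.sqrt (z ^ 2 + c) ≤ Real.sqrt ((z + Real.sqrt c) ^ 2) := Real.sqrt_le_sqrt h
      _ = z + Real.sqrt c := Real.sqrt_sq (by positivity)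
  linarith
end

section
/- Fix z > 0 and λ ≥ 0, and let m₀ = (1/8)·[z² − 2λ + 1 + √(z⁴ + (12λ+2)z² + 4λ² + 12λ + 1)]. Then the function G(m) = √((2m+λ)²/(m+λ) − 1) − √(λ(2m+λ)/(m+λ)) is strictly increasing on the interval [m₀, ∞). -/
open Real Set

/-!
For `λ = 0`, `G m = √(4m - 1)`. For `λ > 0` both radicands are positive and smooth on
`m > 1/4`, so `G` is differentiable there with
`G' = f'/(2√f) - g'/(2√g)`, where `f' = (2m+λ)(2m+3λ)/(m+λ)²` and `g' = λ²/(m+λ)²`.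
After clearing square roots, `G' > 0` becomes the polynomial inequality
`λ⁴((2m+λ)² - (m+λ)) < λ(2m+λ)³(2m+3λ)²`, which holds because `λ ≤ 2m+λ` and
`λ ≤ 2m+3λ`. Finally `m₀ > 1/4` as soon as `z > 0`.
-/

noncomputable def fisherThreshold (lam m : ℝ) : ℝ :=
  √((2 * m + lam) ^ 2 / (m + lam) - 1) - √(lam * (2 * m + lam) / (m + lam))

lemma div_two_mul_sqrt_lt_div_two_mul_sqrt {a b x y : ℝ} (hx : 0 < x) (hy : 0 < y) (ha : 0 ≤ a)
    (h : b ^ 2 * x < a ^ 2 * y) : b / (2 * √y) < a / (2 * √x) := by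
  have hsx := Real.sqrt_pos.2 hx
  have hsy := Real.sqrt_pos.2 hy
  have hlt : b * √x < a * √y :=
    calc b * √x ≤ |b| * √x := by gcongr; exact le_abs_self b
      _ = √(b ^ 2 * x) := by rw [Real.sqrt_mul (sq_nonneg b), Real.sqrt_sq_eq_abs]
      _ < √(a ^ 2 * y) := Real.sqrt_lt_sqrt (by positivity) h
      _ = a * √y := by rw [Real.sqrt_mul (sq_nonneg a), Real.sqrt_sq ha]
  rw [div_lt_div_iff₀ (by positivity) (by positivity)]
  nlinarith

section

variable {lam m : ℝ}

lemma one_lt_sq_div (hlam : 0 ≤ lam) (hm : 1 / 4 < m) : 1 < (2 * m + lam) ^ 2 / (m + lam) := by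
  rw [one_lt_div (by linarith)]
  nlinarith [mul_nonneg hlam (sub_pos.2 hm).le]

lemma hasDerivAt_two_mul_add (lam m : ℝ) : HasDerivAt (fun m => 2 * m + lam) 2 m := by
  simpa using ((hasDerivAt_id' m).const_mul 2).add_const lam

lemma hasDerivAt_sq_div (hm : m + lam ≠ 0) :
    HasDerivAt (fun m => (2 * m + lam) ^ 2 / (m + lam) - 1)
      ((2 * m + lam) * (2 * m + 3 * lam) / (m + lam) ^ 2) m := by
  refine ((((hasDerivAt_two_mul_add lam m).pow 2).div
    ((hasDerivAt_id' m).add_const lam) hm).sub_const 1).congr_deriv ?_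
  simp only [Pi.pow_apply, Nat.cast_ofNat]
  ring

lemma hasDerivAt_mul_div (hm : m + lam ≠ 0) :
    HasDerivAt (fun m => lam * (2 * m + lam) / (m + lam)) (lam ^ 2 / (m + lam) ^ 2) m := by
  refine (((hasDerivAt_two_mul_add lam m).const_mul lam).div
    ((hasDerivAt_id' m).add_const lam) hm).congr_deriv ?_
  ring

lemma hasDerivAt_fisherThreshold (hlam : 0 < lam) (hm : 1 / 4 < m) :
    HasDerivAt (fisherThreshold lam)
      ((2 * m + lam) * (2 * m + 3 * lam) / (m + lam) ^ 2 /
          (2 * √((2 * m + lam) ^ 2 / (m + lam) - 1)) -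
        lam ^ 2 / (m + lam) ^ 2 / (2 * √(lam * (2 * m + lam) / (m + lam)))) m := by
  have hm' : m + lam ≠ 0 := by linarith
  have hf : (2 * m + lam) ^ 2 / (m + lam) - 1 ≠ 0 := (sub_pos.2 (one_lt_sq_div hlam.le hm)).ne'
  have hg : lam * (2 * m + lam) / (m + lam) ≠ 0 := by
    have : 0 < m + lam := by linarith
    positivity
  exact ((hasDerivAt_sq_div hm').sqrt hf).sub ((hasDerivAt_mul_div hm').sqrt hg)

lemma sq_deriv_radicand_mul_lt (hlam : 0 < lam) (hm : 1 / 4 < m) :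
    (lam ^ 2 / (m + lam) ^ 2) ^ 2 * ((2 * m + lam) ^ 2 / (m + lam) - 1) <
      ((2 * m + lam) * (2 * m + 3 * lam) / (m + lam) ^ 2) ^ 2 *
        (lam * (2 * m + lam) / (m + lam)) := by
  have hq : 0 < m + lam := by linarith
  have hp : lam < 2 * m + lam := by linarith
  have hr : lam ^ 2 < (2 * m + 3 * lam) ^ 2 := by nlinarith
  suffices lam ^ 4 * ((2 * m + lam) ^ 2 - (m + lam)) <
      lam * (2 * m + lam) ^ 3 * (2 * m + 3 * lam) ^ 2 by
    rw [div_pow, div_pow, div_sub_one hq.ne', div_mul_div_comm, div_mul_div_comm,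
      div_lt_div_iff_of_pos_right (by positivity)]
    linarith
  calc lam ^ 4 * ((2 * m + lam) ^ 2 - (m + lam)) < lam ^ 3 * (2 * m + lam) ^ 2 * lam := by
        nlinarith [pow_pos hlam 4]
    _ < lam ^ 3 * (2 * m + lam) ^ 2 * (2 * m + lam) := by gcongr
    _ = lam * (2 * m + lam) ^ 3 * lam ^ 2 := by ring
    _ < lam * (2 * m + lam) ^ 3 * (2 * m + 3 * lam) ^ 2 := by gcongr

lemma fisherThreshold_zero (hm : m ≠ 0) : fisherThreshold 0 m = √(4 * m - 1) := by
  simp only [fisherThreshold, add_zero, zero_mul, zero_div, Real.sqrt_zero, sub_zero]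
  congr 2
  field_simp
  ring

lemma strictMonoOn_fisherThreshold (hlam : 0 ≤ lam) :
    StrictMonoOn (fisherThreshold lam) (Ioi (1 / 4)) := by
  rcases hlam.eq_or_lt with rfl | hlam
  · intro a ha b hb hab
    rw [mem_Ioi] at ha hb
    rw [fisherThreshold_zero (by linarith), fisherThreshold_zero (by linarith)]
    exact Real.sqrt_lt_sqrt (by linarith) (by linarith)
  refine strictMonoOn_of_deriv_pos (convex_Ioi _)
    (fun m hm => (hasDerivAt_fisherThreshold hlam hm).continuousAt.continuousWithinAt) ?_
  intro m hm
  rw [interior_Ioi, mem_Ioi] at hm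
  have hq : 0 < m + lam := by linarith
  rw [(hasDerivAt_fisherThreshold hlam hm).deriv, sub_pos]
  exact div_two_mul_sqrt_lt_div_two_mul_sqrt (sub_pos.2 (one_lt_sq_div hlam.le hm)) (by positivity)
    (by positivity) (sq_deriv_radicand_mul_lt hlam hm)

end

lemma one_quarter_lt_m₀ {z lam : ℝ} (hz : 0 < z) (hlam : 0 ≤ lam) :
    1 / 4 < (1 / 8) * (z ^ 2 - 2 * lam + 1 +
      √(z ^ 4 + (12 * lam + 2) * z ^ 2 + 4 * lam ^ 2 + 12 * lam + 1)) := by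
  have hlt : (1 + 2 * lam - z ^ 2) ^ 2 < z ^ 4 + (12 * lam + 2) * z ^ 2 + 4 * lam ^ 2 + 12 * lam + 1 := by
    nlinarith [pow_pos hz 2]
  have := Real.lt_sqrt_of_sq_lt hlt
  linarith

/-- Fix `z > 0`, `λ ≥ 0`, and let
`m₀ = (1/8)[z² - 2λ + 1 + √(z⁴ + (12λ+2)z² + 4λ² + 12λ + 1)]`.  Then
`G m = √((2m+λ)²/(m+λ) - 1) - √(λ(2m+λ)/(m+λ))` is strictly increasing on `[m₀, ∞)`. -/
theorem stmt9_G_strictMonoOn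
    (z lam : ℝ) (hz : 0 < z) (hlam : 0 ≤ lam)
    (G : ℝ → ℝ)
    (hG : G = fun m => Real.sqrt ((2 * m + lam) ^ 2 / (m + lam) - 1) -
      Real.sqrt (lam * (2 * m + lam) / (m + lam)))
    (m₀ : ℝ)
    (hm₀ : m₀ = (1 / 8) * (z ^ 2 - 2 * lam + 1 +
      Real.sqrt (z ^ 4 + (12 * lam + 2) * z ^ 2 + 4 * lam ^ 2 + 12 * lam + 1))) :
    StrictMonoOn G (Set.Ici m₀) := by
  rw [show G = fisherThreshold lam from hG]
  exact (strictMonoOn_fisherThreshold hlam).mono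
    (Ici_subset_Ioi.2 (hm₀ ▸ one_quarter_lt_m₀ hz hlam))
end

section
/- Let K ≥ 8 be an integer. For t > 0 let W₁, W₂, W₃, W₄ be mutually independent Poisson random variables with mean 2t, and define B_K(t) = (1/2)·[1 − Σ_{n=−64}^{64} Σ_{k=−K}^{K} P(W₁ − W₂ = k)·P(W₃ − W₄ = n − 8k)]. Then, as t → 0⁺, B_K(t) = (8/567)·t⁹ + o(t⁹). -/
/-!
Write `q k = P(W₁ - W₂ = k)` and `r = 2t`. Then `exp (-2r) r^|k| / |k|! ≤ q k ≤ r^|k| / |k|!`,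
the upper bound because `W₁ - W₂ = k ≥ 0` forces `W₁ ≥ k`. Substituting `j = n - 8k`, the
quantity `1 - Σ` is the mass of `q k * q j` outside the region `|k| ≤ K, |j + 8k| ≤ 64` of `ℤ²`.
When `K ≥ 8`, the only lattice points outside that region with `|k| + |j| ≤ 9` are `±(8, 1)` and
`±(9, 0)`. They contribute `2 r⁹ (1/8! + 1/9!) = (16/567) t⁹ + O(t¹⁰)`, and all other points
together carry mass `O(r¹⁰)`.
-/

open MeasureTheory ProbabilityTheory Filter Asymptotics Real Set
open scoped NNReal ENNReal Topology Nat

lemma poissonMeasure_real_Ici_le (r : ℝ≥0) (a : ℕ) :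
    (poissonMeasure r).real (Ici a) ≤ r ^ a / a ! := by
  set p : ℕ → ℝ := fun n => exp (-r) * r ^ n / (n)!
  have hp : HasSum p 1 := hasSum_one_poissonMeasure r
  have hshift (j : ℕ) : p (j + a) ≤ r ^ a / a ! * p j := by
    have : (a ! * j ! : ℝ) ≤ (a + j)! := by
      exact_mod_cast Nat.le_of_dvd (Nat.factorial_pos _)
        (Nat.factorial_mul_factorial_dvd_factorial_add a j)
    simp only [p, add_comm j a, pow_add]
    rw [div_mul_div_comm, div_le_div_iff₀ (by positivity) (by positivity)]
    have : (0 : ℝ) ≤ exp (-r) * (r ^ a * r ^ j) := by positivity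
    nlinarith
  have hp0 (n : ℕ) : 0 ≤ p n := by positivity
  have hind : Summable fun n => p n • (Ici a).indicator (1 : ℕ → ℝ) n :=
    hp.summable.of_nonneg_of_le (fun n => by by_cases h : n ∈ Ici a <;> simp [h, hp0])
      fun n => by by_cases h : n ∈ Ici a <;> simp [h, hp0]
  rw [← integral_indicator_one measurableSet_Ici, integral_poissonMeasure]
  calc ∑' n, p n • (Ici a).indicator 1 n = ∑' j, p (j + a) := by
        rw [← hind.sum_add_tsum_nat_add a, Finset.sum_eq_zero fun n hn => by
          simp [(Finset.mem_range.1 hn).not_ge]]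
        simp
    _ ≤ ∑' j, r ^ a / a ! * p j :=
        Summable.tsum_le_tsum hshift
          ((hp.summable.mul_left _).of_nonneg_of_le (fun _ => hp0 _) hshift)
          (hp.summable.mul_left _)
    _ = r ^ a / a ! := by rw [tsum_mul_left, hp.tsum_eq, mul_one]

noncomputable def skellam (r : ℝ≥0) (k : ℤ) : ℝ :=
  ((poissonMeasure r).prod (poissonMeasure r)).real {p : ℕ × ℕ | (p.1 : ℤ) - p.2 = k}

section Skellam

variable (r : ℝ≥0)

lemma skellam_nonneg (k : ℤ) : 0 ≤ skellam r k := measureReal_nonneg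

lemma skellam_neg (k : ℤ) : skellam r (-k) = skellam r k := by
  rw [skellam, ← Measure.prod_swap, map_measureReal_apply measurable_swap .of_discrete]
  congr 1
  ext p
  change (p.2 : ℤ) - p.1 = -k ↔ (p.1 : ℤ) - p.2 = k
  omega

lemma skellam_natCast_le (a : ℕ) : skellam r a ≤ r ^ a / a ! :=
  calc skellam r a ≤ ((poissonMeasure r).prod (poissonMeasure r)).real (Ici a ×ˢ univ) :=
        measureReal_mono fun p (hp : _ = _) => ⟨show a ≤ p.1 by omega, trivial⟩
    _ ≤ r ^ a / a ! := by simpa using poissonMeasure_real_Ici_le r a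

lemma le_skellam_natCast (a : ℕ) : exp (-(2 * r)) * r ^ a / a ! ≤ skellam r a :=
  calc exp (-(2 * r)) * r ^ a / a !
        = ((poissonMeasure r).prod (poissonMeasure r)).real ({a} ×ˢ {0}) := by
          rw [measureReal_prod_prod, poissonMeasure_real_singleton, poissonMeasure_real_singleton,
            two_mul, neg_add, exp_add]
          simp only [pow_zero, Nat.factorial_zero]
          ring
    _ ≤ skellam r a := measureReal_mono (by rintro ⟨m, n⟩ ⟨rfl, rfl⟩; simp)

lemma skellam_le (k : ℤ) : skellam r k ≤ r ^ k.natAbs / k.natAbs ! := by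
  obtain ⟨a, rfl | rfl⟩ := Int.eq_nat_or_neg k <;> simpa [skellam_neg] using skellam_natCast_le r a

lemma hasSum_skellam : HasSum (skellam r) 1 := by
  set μ := (poissonMeasure r).prod (poissonMeasure r)
  have h : ∑' k : ℤ, μ ((fun p : ℕ × ℕ => (p.1 : ℤ) - p.2) ⁻¹' {k}) = 1 := by
    rw [← tsum_univ, tsum_measure_preimage_singleton countable_univ fun _ _ => .of_discrete,
      preimage_univ, measure_univ]
  have := ENNReal.hasSum_toReal (h ▸ ENNReal.one_ne_top)
  rwa [← ENNReal.tsum_toReal_eq fun _ => measure_ne_top _ _, h, ENNReal.toReal_one] at this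

lemma abs_skellam_mul_skellam_sub_le (a b : ℕ) :
    |skellam r a * skellam r b - r ^ (a + b) / (a ! * b !)| ≤
      4 * r * (r ^ (a + b) / (a ! * b !)) := by
  have hM : r ^ (a + b) / (a ! * b ! : ℝ) = r ^ a / a ! * (r ^ b / b !) := by
    rw [pow_add, mul_div_mul_comm]
  have hexp : 1 - 4 * r ≤ exp (-(2 * r)) * exp (-(2 * r)) := by
    rw [← exp_add]; linarith [add_one_le_exp (-(2 * r) + -(2 * r))]
  have hupper := mul_le_mul (skellam_natCast_le r a) (skellam_natCast_le r b) (skellam_nonneg r b)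
    (by positivity)
  have hlower := mul_le_mul (le_skellam_natCast r a) (le_skellam_natCast r b) (by positivity)
    (skellam_nonneg r a)
  have hM0 : 0 ≤ r ^ a / a ! * (r ^ b / b ! : ℝ) := by positivity
  rw [hM, abs_sub_le_iff]
  constructor
  · nlinarith
  · have : (1 - 4 * r) * (r ^ a / a ! * (r ^ b / b !)) ≤
        exp (-(2 * r)) * r ^ a / a ! * (exp (-(2 * r)) * r ^ b / b !) := by
      calc _ ≤ exp (-(2 * r)) * exp (-(2 * r)) * (r ^ a / a ! * (r ^ b / b !)) :=
            mul_le_mul_of_nonneg_right hexp hM0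
        _ = _ := by ring
    nlinarith

end Skellam

lemma summable_inv_factorial_natAbs : Summable fun k : ℤ => ((k.natAbs)! : ℝ)⁻¹ :=
  .of_nat_of_neg (by simpa using Real.summable_pow_div_factorial 1)
    (by simpa using Real.summable_pow_div_factorial 1)

section SkellamPair

variable (r : ℝ≥0)

lemma hasSum_skellam_mul_skellam :
    HasSum (fun p : ℤ × ℤ => skellam r p.1 * skellam r p.2) 1 := by
  simpa using (hasSum_skellam r).mul (hasSum_skellam r)
    ((hasSum_skellam r).summable.mul_of_nonneg (hasSum_skellam r).summable
      (skellam_nonneg r) (skellam_nonneg r))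

lemma sum_skellam_mul_skellam_le_one (s : Finset (ℤ × ℤ)) :
    ∑ p ∈ s, skellam r p.1 * skellam r p.2 ≤ 1 :=
  sum_le_hasSum s (fun _ _ => mul_nonneg (skellam_nonneg r _) (skellam_nonneg r _))
    (hasSum_skellam_mul_skellam r)

lemma one_sub_sum_skellam_mul_skellam_le (hr : r ≤ 1) {m : ℕ} {s : Finset (ℤ × ℤ)}
    (hs : ∀ p : ℤ × ℤ, p.1.natAbs + p.2.natAbs < m → p ∈ s) :
    1 - ∑ p ∈ s, skellam r p.1 * skellam r p.2 ≤
      (∑' k : ℤ, ((k.natAbs)! : ℝ)⁻¹) ^ 2 * r ^ m := by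
  set f := fun p : ℤ × ℤ => skellam r p.1 * skellam r p.2
  set g := fun p : ℤ × ℤ => ((p.1.natAbs)! : ℝ)⁻¹ * ((p.2.natAbs)! : ℝ)⁻¹
  have hf : HasSum f 1 := hasSum_skellam_mul_skellam r
  have hg : Summable g := summable_inv_factorial_natAbs.mul_of_nonneg
    summable_inv_factorial_natAbs (fun _ => by positivity) (fun _ => by positivity)
  have hfg (p : ((s : Set (ℤ × ℤ))ᶜ : Set (ℤ × ℤ))) : f p ≤ r ^ m * g p := by
    have hm : m ≤ (p : ℤ × ℤ).1.natAbs + (p : ℤ × ℤ).2.natAbs :=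
      not_lt.1 fun h => p.2 (hs p h)
    calc f p ≤ r ^ (p : ℤ × ℤ).1.natAbs / _ * (r ^ (p : ℤ × ℤ).2.natAbs / _) :=
          mul_le_mul (skellam_le r _) (skellam_le r _) (skellam_nonneg r _) (by positivity)
      _ = r ^ ((p : ℤ × ℤ).1.natAbs + (p : ℤ × ℤ).2.natAbs) * g p := by
          simp only [g, pow_add]; ring
      _ ≤ r ^ m * g p := mul_le_mul_of_nonneg_right
          (pow_le_pow_of_le_one r.2 (by exact_mod_cast hr) hm) (by positivity)
  calc 1 - ∑ p ∈ s, f p = ∑' p : ((s : Set (ℤ × ℤ))ᶜ : Set (ℤ × ℤ)), f p := by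
        rw [← hf.tsum_eq, ← hf.summable.sum_add_tsum_compl (s := s)]; ring
    _ ≤ ∑' p : ((s : Set (ℤ × ℤ))ᶜ : Set (ℤ × ℤ)), r ^ m * g p :=
        Summable.tsum_le_tsum hfg (hf.summable.subtype _) ((hg.mul_left _).subtype _)
    _ ≤ ∑' p, r ^ m * g p :=
        Summable.tsum_subtype_le _ _ (fun _ => by positivity) (hg.mul_left _)
    _ = (∑' k : ℤ, ((k.natAbs)! : ℝ)⁻¹) ^ 2 * r ^ m := by
        have h := summable_inv_factorial_natAbs.norm
        rw [tsum_mul_left, sq, tsum_mul_tsum_of_summable_norm h h, mul_comm]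

end SkellamPair

lemma sum_sum_sub_mul_eq_sum_image {β : Type*} [AddCommMonoid β] (F : ℤ → ℤ → β) (c : ℤ)
    (M N : Finset ℤ) :
    ∑ n ∈ N, ∑ k ∈ M, F k (n - c * k) =
      ∑ p ∈ (M ×ˢ N).image (fun x => (x.1, x.2 - c * x.1)), F p.1 p.2 := by
  rw [Finset.sum_comm, ← Finset.sum_product', Finset.sum_image]
  rintro ⟨k, n⟩ - ⟨k', n'⟩ - h
  obtain ⟨rfl, h⟩ := Prod.mk.inj h
  simp only [Prod.mk.injEq, true_and]
  linarith

lemma exists_abs_one_sub_sum_sum_skellam_le {K : ℕ} (hK : 8 ≤ K) : ∃ C, ∀ r : ℝ≥0, r ≤ 1 →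
    |1 - ∑ n ∈ Finset.Icc (-64 : ℤ) 64, ∑ k ∈ Finset.Icc (-(K : ℤ)) K,
        skellam r k * skellam r (n - 8 * k) - 2 * (r ^ 9 / 8 ! + r ^ 9 / 9 !)| ≤
      C * (r : ℝ) ^ 10 := by
  set R := (Finset.Icc (-(K : ℤ)) K ×ˢ Finset.Icc (-64 : ℤ) 64).image
    fun x => (x.1, x.2 - 8 * x.1)
  set E : Finset (ℤ × ℤ) := {(8, 1), (-8, -1), (9, 0), (-9, 0)}
  have hdisj : Disjoint R E := by
    simp [R, E, Finset.disjoint_left]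
    omega
  have hcover (p : ℤ × ℤ) (hp : p.1.natAbs + p.2.natAbs < 10) : p ∈ R ∪ E := by
    by_cases hpE : p ∈ E
    · exact Finset.mem_union_right _ hpE
    refine Finset.mem_union_left _ (Finset.mem_image.2 ⟨(p.1, p.2 + 8 * p.1), ?_, by simp⟩)
    simp only [E, Finset.mem_insert, Finset.mem_singleton, Prod.ext_iff, not_or] at hpE
    simp only [Finset.mem_product, Finset.mem_Icc]
    omega
  refine ⟨(∑' k : ℤ, ((k.natAbs)! : ℝ)⁻¹) ^ 2 + 8 * (1 / 8 ! + 1 / 9 ! : ℝ), fun r hr => ?_⟩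
  have hsplit : 1 - ∑ n ∈ Finset.Icc (-64 : ℤ) 64, ∑ k ∈ Finset.Icc (-(K : ℤ)) K,
        skellam r k * skellam r (n - 8 * k) =
      (1 - ∑ p ∈ R ∪ E, skellam r p.1 * skellam r p.2) +
        2 * (skellam r 8 * skellam r 1 + skellam r 9 * skellam r 0) := by
    rw [sum_sum_sub_mul_eq_sum_image (fun k j => skellam r k * skellam r j), Finset.sum_union hdisj]
    simp [E, skellam_neg]
    ring
  have htail := one_sub_sum_skellam_mul_skellam_le r hr (m := 10) hcover
  have hmass := sum_skellam_mul_skellam_le_one r (R ∪ E)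
  have h81 := abs_skellam_mul_skellam_sub_le r 8 1
  have h90 := abs_skellam_mul_skellam_sub_le r 9 0
  rw [hsplit]
  norm_num [Nat.factorial] at h81 h90 ⊢
  rw [abs_le] at h81 h90 ⊢
  constructor <;> linarith [h81.1, h81.2, h90.1, h90.2]

lemma isBigO_one_sub_sum_sum_skellam {K : ℕ} (hK : 8 ≤ K) :
    (fun t : ℝ => 1 - ∑ n ∈ Finset.Icc (-64 : ℤ) 64, ∑ k ∈ Finset.Icc (-(K : ℤ)) K,
        skellam (2 * t).toNNReal k * skellam (2 * t).toNNReal (n - 8 * k) - 16 / 567 * t ^ 9)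
      =O[𝓝[>] 0] fun t => t ^ 10 := by
  obtain ⟨C, hC⟩ := exists_abs_one_sub_sum_sum_skellam_le hK
  refine .of_bound (2 ^ 10 * C) ?_
  filter_upwards [Ioo_mem_nhdsGT (show (0 : ℝ) < 1 / 2 by norm_num)] with t ⟨ht0, ht1⟩
  have h := hC (2 * t).toNNReal (by rw [Real.toNNReal_le_one]; linarith)
  have hmain : 2 * ((2 * t) ^ 9 / 8 ! + (2 * t) ^ 9 / 9 !) = 16 / 567 * t ^ 9 := by
    norm_num [Nat.factorial]; ring
  rw [Real.coe_toNNReal _ (by linarith), hmain] at h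
  rw [Real.norm_eq_abs, Real.norm_eq_abs, abs_of_pos (pow_pos ht0 10)]
  linarith

/-- Let `K ≥ 8`.  For `t > 0`, let `sk t k = P(W - W' = k)` denote the
Skellam probability mass of the difference of two independent Poisson(`2t`) variables
(modelled by the product of two Poisson measures on `ℕ × ℕ`), and define
`B_K t = (1/2)[1 - Σ_{n=-64}^{64} Σ_{k=-K}^{K} sk t k · sk t (n - 8k)]`.
Then `B_K t = (8/567) t⁹ + o(t⁹)` as `t → 0⁺`. -/
theorem stmt13_BK_asymptotics
    (K : ℕ) (hK : 8 ≤ K)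
    (sk : ℝ → ℤ → ℝ)
    (hsk : sk = fun t k =>
      (((poissonMeasure (2 * t).toNNReal).prod (poissonMeasure (2 * t).toNNReal))
        {p : ℕ × ℕ | (p.1 : ℤ) - (p.2 : ℤ) = k}).toReal)
    (B : ℝ → ℝ)
    (hB : B = fun t => (1 / 2) * (1 - ∑ n ∈ Finset.Icc (-64 : ℤ) 64,
      ∑ k ∈ Finset.Icc (-(K : ℤ)) (K : ℤ), sk t k * sk t (n - 8 * k))) :
    (fun t : ℝ => B t - (8 / 567) * t ^ 9) =o[𝓝[>] (0 : ℝ)] (fun t : ℝ => t ^ 9) := by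
  obtain rfl : sk = fun t => skellam (2 * t).toNNReal := hsk
  subst hB
  have h := ((isBigO_one_sub_sum_sum_skellam hK).const_mul_left (1 / 2)).trans_isLittleO
    ((isLittleO_pow_pow (by norm_num : 9 < 10)).mono nhdsWithin_le_nhds)
  exact h.congr_left fun t => by ring
end
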